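/- arXiv:0801.3980 — 3 statements merged into one kernel-verified Lean document; each statement's English description precedes it below -/
import Mathlib

section
/- In the category of finite nonempty linearly ordered sets (the simplex category Δ), inverting all 'first vertex' maps [0] → [k] and all 'last vertex' maps [0] → [k] inverts every morphism: in the localization of Δ at the first- and last-vertex maps, every morphism becomes an isomorphism. -/
open CategoryTheory

/-- The class of "first vertex" and "last vertex" maps `[0] → [k]` in the simplex
category: morphisms whose source is `[0]` and which hit either the first or the
last vertex. -/
def FirstLastVertex : MorphismProperty SimplexCategory := fun a b f =>
  a.len = 0 ∧ ((∀ i, f.toOrderHom i = 0) ∨ (∀ i, f.toOrderHom i = Fin.last b.len))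

/-!
The vertex `i : [0] → [n]` factors as the last vertex of `[i]` followed by the inclusion
`[i] → [n]` of the initial segment `{0, …, i}`. That inclusion sends the first vertex to the
first vertex, so by two out of three it is inverted, and hence so is every vertex. Any
`f : [m] → [n]` is then inverted because its composite with the first vertex of `[m]` is a
vertex of `[n]`.
-/

open Simplicial

namespace SimplexCategory

lemma firstLastVertex_const_zero (n : SimplexCategory) : FirstLastVertex (⦋0⦌.const n 0) :=
  ⟨rfl, .inl fun _ => rfl⟩

lemma firstLastVertex_const_last (n : SimplexCategory) :
    FirstLastVertex (⦋0⦌.const n (Fin.last n.len)) :=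
  ⟨rfl, .inr fun _ => rfl⟩

lemma isIso_Q_map_const_zero (n : SimplexCategory) :
    IsIso (FirstLastVertex.Q.map (⦋0⦌.const n 0)) :=
  FirstLastVertex.Q_inverts _ (firstLastVertex_const_zero n)

lemma isIso_Q_map_subinterval_zero {n : ℕ} (j : ℕ) (hj : 0 + j ≤ n) :
    IsIso (FirstLastVertex.Q.map (subinterval 0 j hj)) := by
  have := isIso_Q_map_const_zero ⦋n⦌
  rw [show ⦋0⦌.const ⦋n⦌ 0 = ⦋0⦌.const ⦋j⦌ 0 ≫ subinterval 0 j hj from rfl,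
    Functor.map_comp] at this
  have := isIso_Q_map_const_zero ⦋j⦌
  exact IsIso.of_isIso_comp_left (FirstLastVertex.Q.map (⦋0⦌.const ⦋j⦌ 0)) _

lemma isIso_Q_map_const (n : SimplexCategory) (i : Fin (n.len + 1)) :
    IsIso (FirstLastVertex.Q.map (⦋0⦌.const n i)) := by
  rw [show ⦋0⦌.const n i = ⦋0⦌.const ⦋i.1⦌ (Fin.last i) ≫ subinterval 0 i (by omega) from rfl,
    Functor.map_comp]
  have := FirstLastVertex.Q_inverts _ (firstLastVertex_const_last ⦋i.1⦌)
  have := isIso_Q_map_subinterval_zero i.1 (by omega : 0 + i.1 ≤ n.len)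
  infer_instance

end SimplexCategory

/-- in the localization of the simplex category `Δ` at the first- and
last-vertex maps, every morphism becomes an isomorphism. -/
theorem simplexCategory_localization_groupoid
    {a b : SimplexCategory} (f : a ⟶ b) :
    IsIso (FirstLastVertex.Q.map f) := by
  have := SimplexCategory.isIso_Q_map_const b (f.toOrderHom 0)
  rw [← SimplexCategory.const_comp, Functor.map_comp] at this
  have := SimplexCategory.isIso_Q_map_const_zero a
  exact IsIso.of_isIso_comp_left (FirstLastVertex.Q.map (⦋0⦌.const a 0)) _
end

section
/- Let X' ⊆ X be a union of connected components of X and let p : X → Y be a quasifibration of topological spaces. Then the restriction p|_{X'} : X' → Y is a quasifibration, where a quasifibration is a map such that for every point of Y the canonical map from the fiber to the homotopy fiber is a weak homotopy equivalence. -/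
open Metric unitInterval

noncomputable section

/-- The unit sphere `S^j` in `ℝ^{j+1}`. -/
abbrev USphere (j : ℕ) : Type := (sphere (0 : EuclideanSpace ℝ (Fin (j+1))) 1 : Set _)

/-- The unit disk `D^{j+1}` in `ℝ^{j+1}`. -/
abbrev UDisk (j : ℕ) : Type := (closedBall (0 : EuclideanSpace ℝ (Fin (j+1))) 1 : Set _)

/-- Every map `S^j → Z` extends over `D^{j+1}`. -/
def SphereMapExtends (j : ℕ) (Z : Type*) [TopologicalSpace Z] : Prop :=
  ∀ φ : C(USphere j, Z), ∃ ψ : C(UDisk j, Z),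
    ∀ x : USphere j, ψ ⟨x.1, sphere_subset_closedBall x.2⟩ = φ x

/-- A space `Z` is `m`-connected: every map `S^j → Z` for `-1 ≤ j ≤ m` extends over
`D^{j+1}`.  (The case `j = -1` says that `Z` is nonempty.) -/
def SpaceConn (m : ℤ) (Z : Type*) [TopologicalSpace Z] : Prop :=
  ((-1 : ℤ) ≤ m → Nonempty Z) ∧ ∀ j : ℕ, (j : ℤ) ≤ m → SphereMapExtends j Z

/-- The homotopy fiber of `f` over `y`: pairs `(x, γ)` with `γ` a path from `f x` to `y`. -/
abbrev HoFiber {X Y : Type*} [TopologicalSpace X] [TopologicalSpace Y]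
    (f : C(X, Y)) (y : Y) : Type _ :=
  { p : X × C(I, Y) // p.2 0 = f p.1 ∧ p.2 1 = y }

/-- A map is `k`-connected if each of its homotopy fibers is `(k-1)`-connected. -/
def ConnMap (k : ℤ) {X Y : Type*} [TopologicalSpace X] [TopologicalSpace Y]
    (f : C(X, Y)) : Prop :=
  ∀ y : Y, SpaceConn (k - 1) (HoFiber f y)

end

noncomputable section

/-- A basepoint on the sphere `S^n`. -/
def SpherePt (n : ℕ) : USphere n :=
  ⟨EuclideanSpace.single 0 1, by simp [EuclideanSpace.norm_single]⟩

/-- Based maps `(S^n, pt) → (X, x)`. -/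
def BasedMap (n : ℕ) (X : Type*) [TopologicalSpace X] (x : X) : Type _ :=
  { φ : C(USphere n, X) // φ (SpherePt n) = x }

/-- Based homotopy (homotopy relative to the basepoint). -/
def basedSetoid (n : ℕ) (X : Type*) [TopologicalSpace X] (x : X) :
    Setoid (BasedMap n X x) where
  r φ ψ := φ.1.HomotopicRel ψ.1 {SpherePt n}
  iseqv := ⟨fun φ => ContinuousMap.HomotopicRel.refl _,
    fun h => h.symm, fun h h' => h.trans h'⟩

/-- The `n`-th homotopy set of `(X, x)`: based maps from `S^n` modulo based homotopy. -/
def PiSet (n : ℕ) (X : Type*) [TopologicalSpace X] (x : X) : Type _ :=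
  Quotient (basedSetoid n X x)

/-- The induced map on homotopy sets. -/
def PiMap (n : ℕ) {X Y : Type*} [TopologicalSpace X] [TopologicalSpace Y]
    (f : C(X, Y)) (x : X) : PiSet n X x → PiSet n Y (f x) :=
  Quotient.map (fun φ => ⟨f.comp φ.1, by simp [φ.2]⟩)
    (fun φ ψ h => h.elim fun F => ⟨F.compContinuousMap f⟩)

/-- The induced map on path components. -/
def Pi0Map {X Y : Type*} [TopologicalSpace X] [TopologicalSpace Y] (f : C(X, Y)) :
    ZerothHomotopy X → ZerothHomotopy Y :=
  Quotient.map f (fun _ _ h => h.elim fun p => ⟨p.map f.continuous⟩)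

/-- A weak homotopy equivalence: a map inducing a bijection on path components and
bijections (hence isomorphisms) on all homotopy groups at all basepoints. -/
def WeakHomotopyEquiv {X Y : Type*} [TopologicalSpace X] [TopologicalSpace Y]
    (f : C(X, Y)) : Prop :=
  Function.Bijective (Pi0Map f) ∧
    ∀ n : ℕ, 1 ≤ n → ∀ x : X, Function.Bijective (PiMap n f x)

end

noncomputable section

/-- The (strict) fiber of `f` over `y`. -/
abbrev StrictFiber {X Y : Type*} [TopologicalSpace X] [TopologicalSpace Y]
    (f : C(X, Y)) (y : Y) : Type _ := { x : X // f x = y }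

/-- The canonical map from the fiber to the homotopy fiber (using the constant path). -/
def fiberToHoFiber {X Y : Type*} [TopologicalSpace X] [TopologicalSpace Y]
    (f : C(X, Y)) (y : Y) : C(StrictFiber f y, HoFiber f y) where
  toFun x := ⟨(x.1, ContinuousMap.const I y), x.2.symm, rfl⟩
  continuous_toFun := by
    apply Continuous.subtype_mk
    exact (continuous_subtype_val.prodMk continuous_const)

/-- A quasifibration: for every point of the base, the canonical map from the fiber
to the homotopy fiber is a weak homotopy equivalence. -/
def IsQuasifibration {X Y : Type*} [TopologicalSpace X] [TopologicalSpace Y]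
    (p : C(X, Y)) : Prop :=
  ∀ y : Y, WeakHomotopyEquiv (fiberToHoFiber p y)

end

open Topology Set

/-! Because `X'` is clopen, the fiber and the homotopy fiber of `p|_{X'}` over `y` embed in those
of `p` as clopen subspaces, the first being the preimage of the second under the canonical map. A map from a connected space (a path, a sphere, a cylinder on a sphere) that meets a
clopen embedded subspace lifts into it, so both inclusions are injective on `π₀` and bijective on
`πₙ` for `n ≥ 1`; the weak equivalence of the outer map then passes to the inner one through the
commutative square. -/

theorem connectedSpace_uSphere {n : ℕ} (hn : 1 ≤ n) : ConnectedSpace (USphere n) := by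
  refine Subtype.connectedSpace (isConnected_sphere ?_ _ zero_le_one)
  rw [← Module.finrank_eq_rank, finrank_euclideanSpace_fin]
  exact_mod_cast Nat.lt_of_lt_of_le Nat.one_lt_two (by omega)

section Functoriality

variable {A B C : Type*} [TopologicalSpace A] [TopologicalSpace B] [TopologicalSpace C]

theorem pi0Map_comp (g : C(B, C)) (f : C(A, B)) :
    Pi0Map (g.comp f) = Pi0Map g ∘ Pi0Map f := by
  funext c
  induction c using Quotient.ind
  rfl

theorem piMap_comp (n : ℕ) (g : C(B, C)) (f : C(A, B)) (a : A) :
    PiMap n (g.comp f) a = PiMap n g (f a) ∘ PiMap n f a := by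
  funext c
  induction c using Quotient.ind
  rfl

theorem bijective_piMap_congr (n : ℕ) {f g : C(A, B)} (h : f = g) (a : A) :
    Function.Bijective (PiMap n f a) ↔ Function.Bijective (PiMap n g a) := by
  -- the codomain of `PiMap n f a` depends on `f`, so `h` cannot be used by `rw` directly
  subst h
  rfl

end Functoriality

section ClopenEmbedding

variable {A B : Type*} [TopologicalSpace A] [TopologicalSpace B] {j : C(A, B)}

theorem exists_lift_of_isClopen_range (hj : IsEmbedding j) (hjr : IsClopen (range j))
    {K : Type*} [TopologicalSpace K] [PreconnectedSpace K]
    (g : C(K, B)) {k₀ : K} (hk₀ : g k₀ ∈ range j) : ∃ g' : C(K, A), ∀ k, j (g' k) = g k := by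
  have hmem : ∀ k, g k ∈ range j :=
    eq_univ_iff_forall.1 ((hjr.preimage g.continuous).eq_univ ⟨k₀, hk₀⟩)
  choose g' hg' using hmem
  have hcomp : j ∘ g' = g := funext hg'
  exact ⟨⟨g', hj.continuous_iff.2 (hcomp ▸ g.continuous)⟩, hg'⟩

theorem mem_range_of_joined_of_isClopen_range (hj : IsEmbedding j) (hjr : IsClopen (range j))
    {b : B} {a : A} (h : Joined b (j a)) : b ∈ range j := by
  obtain ⟨γ⟩ := h
  obtain ⟨γ', hγ'⟩ := exists_lift_of_isClopen_range hj hjr γ.toContinuousMap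
    (k₀ := 1) ⟨a, by simp⟩
  exact ⟨γ' 0, by simp [hγ']⟩

theorem injective_pi0Map_of_isClopen_range (hj : IsEmbedding j) (hjr : IsClopen (range j)) :
    Function.Injective (Pi0Map j) := by
  intro c c' hcc'
  induction c using Quotient.ind with | _ a => ?_
  induction c' using Quotient.ind with | _ a' => ?_
  obtain ⟨γ⟩ : Joined (j a) (j a') := Quotient.exact hcc'
  obtain ⟨γ', hγ'⟩ := exists_lift_of_isClopen_range hj hjr γ.toContinuousMap
    (k₀ := 0) ⟨a, by simp⟩
  exact Quotient.sound ⟨⟨γ', hj.injective (by simp [hγ']), hj.injective (by simp [hγ'])⟩⟩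

theorem injective_piMap_of_isClopen_range (hj : IsEmbedding j) (hjr : IsClopen (range j))
    {n : ℕ} (hn : 1 ≤ n) (a : A) : Function.Injective (PiMap n j a) := by
  have := connectedSpace_uSphere hn
  intro c c' hcc'
  induction c using Quotient.ind with | _ φ => ?_
  induction c' using Quotient.ind with | _ ψ => ?_
  obtain ⟨F⟩ := Quotient.exact hcc'
  obtain ⟨G, hG⟩ := exists_lift_of_isClopen_range hj hjr F.toContinuousMap
    (k₀ := (0, SpherePt n)) ⟨a, by simp [φ.2]⟩
  refine Quotient.sound ⟨⟨⟨G, fun x => hj.injective ?_, fun x => hj.injective ?_⟩,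
    fun t x hx => hj.injective ?_⟩⟩
  · simp [hG]
  · simp [hG]
  · simpa [hG] using F.eq_fst t hx

theorem surjective_piMap_of_isClopen_range (hj : IsEmbedding j) (hjr : IsClopen (range j))
    {n : ℕ} (hn : 1 ≤ n) (a : A) : Function.Surjective (PiMap n j a) := by
  have := connectedSpace_uSphere hn
  intro c
  induction c using Quotient.ind with | _ ψ => ?_
  obtain ⟨φ, hφ⟩ := exists_lift_of_isClopen_range hj hjr ψ.1 (k₀ := SpherePt n) ⟨a, ψ.2.symm⟩
  have hbase : φ (SpherePt n) = a := hj.injective (by rw [hφ, ψ.2])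
  exact ⟨⟦⟨φ, hbase⟩⟧, congrArg _ (Subtype.ext (ContinuousMap.ext hφ))⟩

end ClopenEmbedding

theorem WeakHomotopyEquiv.of_comm_sq_of_isClopen_range
    {A B A' B' : Type*} [TopologicalSpace A] [TopologicalSpace B] [TopologicalSpace A']
    [TopologicalSpace B'] {f : C(A, B)} {f' : C(A', B')} {i : C(A', A)} {j : C(B', B)}
    (hi : IsEmbedding i) (hir : IsClopen (range i)) (hj : IsEmbedding j)
    (hjr : IsClopen (range j)) (hsq : j.comp f' = f.comp i)
    (hpullback : ∀ a, f a ∈ range j → a ∈ range i) (hf : WeakHomotopyEquiv f) :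
    WeakHomotopyEquiv f' := by
  obtain ⟨⟨hf0_inj, hf0_surj⟩, hfn⟩ := hf
  have hsq0 : Pi0Map j ∘ Pi0Map f' = Pi0Map f ∘ Pi0Map i := by
    rw [← pi0Map_comp, ← pi0Map_comp, hsq]
  have hj0 := injective_pi0Map_of_isClopen_range hj hjr
  refine ⟨⟨?_, ?_⟩, fun n hn a => ?_⟩
  · refine Function.Injective.of_comp (f := Pi0Map j) ?_
    rw [hsq0]
    exact hf0_inj.comp (injective_pi0Map_of_isClopen_range hi hir)
  · intro c'
    induction c' using Quotient.ind with | _ b' => ?_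
    obtain ⟨c, hc⟩ := hf0_surj (Pi0Map j ⟦b'⟧)
    induction c using Quotient.ind with | _ a => ?_
    have hfa : f a ∈ range j :=
      mem_range_of_joined_of_isClopen_range hj hjr (Quotient.exact hc : Joined (f a) (j b'))
    obtain ⟨a', rfl⟩ := hpullback a hfa
    exact ⟨⟦a'⟧, hj0 ((congrFun hsq0 ⟦a'⟧).trans hc)⟩
  · have hjn : Function.Bijective (PiMap n j (f' a)) :=
      ⟨injective_piMap_of_isClopen_range hj hjr hn _,
        surjective_piMap_of_isClopen_range hj hjr hn _⟩
    have hin : Function.Bijective (PiMap n i a) :=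
      ⟨injective_piMap_of_isClopen_range hi hir hn _,
        surjective_piMap_of_isClopen_range hi hir hn _⟩
    have hcomp : Function.Bijective (PiMap n (j.comp f') a) := by
      rw [bijective_piMap_congr n hsq, piMap_comp]
      exact (hfn n hn (i a)).comp hin
    rw [piMap_comp] at hcomp
    exact (hjn.of_comp_iff' _).1 hcomp

section Restriction

variable {X Y : Type*} [TopologicalSpace X] [TopologicalSpace Y] (p : C(X, Y)) (X' : Set X)
  (y : Y)

def StrictFiber.ofRestrict : C(StrictFiber (p.restrict X') y, StrictFiber p y) :=
  ⟨fun z => ⟨z.1.1, z.2⟩, by fun_prop⟩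

def HoFiber.ofRestrict : C(HoFiber (p.restrict X') y, HoFiber p y) :=
  ⟨fun e => ⟨(e.1.1.1, e.1.2), e.2⟩, by fun_prop⟩

theorem StrictFiber.isEmbedding_ofRestrict : IsEmbedding (StrictFiber.ofRestrict p X' y) :=
  .of_comp (StrictFiber.ofRestrict p X' y).continuous continuous_subtype_val
    (IsEmbedding.subtypeVal.comp IsEmbedding.subtypeVal :
      IsEmbedding (Subtype.val ∘ Subtype.val))

theorem HoFiber.isEmbedding_ofRestrict : IsEmbedding (HoFiber.ofRestrict p X' y) :=
  .of_comp (HoFiber.ofRestrict p X' y).continuous continuous_subtype_val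
    ((IsEmbedding.subtypeVal.prodMap .id).comp IsEmbedding.subtypeVal :
      IsEmbedding (Prod.map Subtype.val id ∘ Subtype.val))

theorem StrictFiber.range_ofRestrict :
    range (StrictFiber.ofRestrict p X' y) = {z | z.1 ∈ X'} := by
  ext z
  exact ⟨by rintro ⟨w, rfl⟩; exact w.1.2, fun hz => ⟨⟨⟨z.1, hz⟩, z.2⟩, rfl⟩⟩

theorem HoFiber.range_ofRestrict :
    range (HoFiber.ofRestrict p X' y) = {e | e.1.1 ∈ X'} := by
  ext e
  exact ⟨by rintro ⟨w, rfl⟩; exact w.1.1.2, fun he => ⟨⟨(⟨e.1.1, he⟩, e.1.2), e.2⟩, rfl⟩⟩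

end Restriction

theorem quasifibration_restrict_general {X Y : Type*} [TopologicalSpace X] [TopologicalSpace Y]
    (p : C(X, Y)) (X' : Set X)
    (hopen : IsOpen X') (hclosed : IsClosed X')
    (hp : IsQuasifibration p) :
    IsQuasifibration (p.restrict X') := by
  intro y
  have hX' : IsClopen X' := ⟨hclosed, hopen⟩
  refine (hp y).of_comm_sq_of_isClopen_range (StrictFiber.isEmbedding_ofRestrict p X' y) ?_
    (HoFiber.isEmbedding_ofRestrict p X' y) ?_ rfl fun z hz => ?_
  · rw [StrictFiber.range_ofRestrict]
    exact hX'.preimage continuous_subtype_val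
  · rw [HoFiber.range_ofRestrict]
    exact hX'.preimage (continuous_fst.comp continuous_subtype_val)
  · rw [HoFiber.range_ofRestrict] at hz
    rwa [StrictFiber.range_ofRestrict]

/-- if `X' ⊆ X` is a union of connected components (an open and closed
subset) and `p : X → Y` is a quasifibration, then the restriction `p|_{X'}` is a
quasifibration. -/
theorem quasifibration_restrict {X Y : Type*} [TopologicalSpace X] [TopologicalSpace Y]
    (p : C(X, Y)) (X' : Set X)
    (hcomp : ∀ x ∈ X', connectedComponent x ⊆ X')
    (hopen : IsOpen X') (hclosed : IsClosed X')
    (hp : IsQuasifibration p) :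
    IsQuasifibration (p.restrict X') :=
  quasifibration_restrict_general p X' hopen hclosed hp
end

section
/- Let X → Y be an (r+1)-cube of spaces viewed as a map of r-cubes. If both Y (as an r-cube) and the (r+1)-cube X → Y are k-cartesian, then X is k-cartesian as an r-cube. -/
open Metric unitInterval

noncomputable section

open ContinuousMap

/-- The affine map of standard simplices induced by a map of index sets. -/
def simplexMap {m n : ℕ} (φ : Fin m → Fin n) :
    C((stdSimplex ℝ (Fin m) : Set _), (stdSimplex ℝ (Fin n) : Set _)) where
  toFun x := ⟨fun i => ∑ j ∈ Finset.univ.filter (fun j => φ j = i), x.1 j, by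
    constructor
    · intro i
      exact Finset.sum_nonneg fun j _ => x.2.1 j
    · rw [Finset.sum_fiberwise_of_maps_to (fun j _ => Finset.mem_univ (φ j)) x.1]
      exact x.2.2⟩
  continuous_toFun := by
    apply Continuous.subtype_mk
    exact continuous_pi fun i => continuous_finset_sum _
      (fun j _ => (continuous_apply j).comp continuous_subtype_val)

/-- A diagram of spaces indexed by a partially ordered set, with strictly functorial
continuous structure maps. -/
structure PDiagram (P : Type*) [PartialOrder P] where
  obj : P → Type*
  topo : ∀ p, TopologicalSpace (obj p)
  map : ∀ {p q : P}, p ≤ q → C(obj p, obj q)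
  map_id : ∀ p : P, map (le_refl p) = ContinuousMap.id (obj p)
  map_comp : ∀ {p q r : P} (h₁ : p ≤ q) (h₂ : q ≤ r),
    map (h₁.trans h₂) = (map h₂).comp (map h₁)

attribute [instance] PDiagram.topo

/-- Restriction of a diagram along a monotone map of posets. -/
def PDiagram.pull {P Q : Type*} [PartialOrder P] [PartialOrder Q]
    (D : PDiagram P) (f : Q →o P) : PDiagram Q where
  obj q := D.obj (f q)
  topo q := D.topo _
  map h := D.map (f.monotone h)
  map_id _ := D.map_id _
  map_comp _ _ := D.map_comp _ _

/-- The homotopy limit of a poset-indexed diagram of spaces: the space of coherent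
families of maps from standard simplices, indexed by chains in the poset.  (This is
the Bousfield–Kan formula, written in terms of chains.) -/
def Holim {P : Type*} [PartialOrder P] (D : PDiagram P) : Type _ :=
  { f : ∀ (n : ℕ) (c : Fin (n + 1) →o P),
      C((stdSimplex ℝ (Fin (n + 1)) : Set _), D.obj (c (Fin.last n))) //
    ∀ (m n : ℕ) (c : Fin (n + 1) →o P) (φ : Fin (m + 1) →o Fin (n + 1)),
      (D.map (c.monotone (Fin.le_last (φ (Fin.last m))))).comp (f m (c.comp φ)) =
        (f n c).comp (simplexMap φ) }

instance {P : Type*} [PartialOrder P] (D : PDiagram P) : TopologicalSpace (Holim D) := by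
  unfold Holim; infer_instance

/-- A cube of spaces indexed by subsets of `ι`. -/
abbrev PCube (ι : Type*) := PDiagram (Set ι)

/-- The poset of nonempty subsets of `ι`. -/
abbrev NESet (ι : Type*) := { S : Set ι // S.Nonempty }

/-- The inclusion of the nonempty subsets into all subsets. -/
def NESet.incl (ι : Type*) : NESet ι →o Set ι := ⟨Subtype.val, fun _ _ h => h⟩

/-- The canonical map from the initial space of a cube to the homotopy limit of the
punctured cube (the restriction to nonempty subsets). -/
def cubeAMap {ι : Type*} (X : PCube ι) :
    C(X.obj ∅, Holim (X.pull (NESet.incl ι))) where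
  toFun x := ⟨fun n c => ContinuousMap.const _ (X.map (Set.empty_subset _) x), by
    intro m n c φ
    ext t
    show X.map _ (X.map _ x) = X.map _ x
    exact ((ContinuousMap.congr_fun (X.map_comp _ _) x).trans
      (ContinuousMap.comp_apply _ _ _)).symm⟩
  continuous_toFun := by
    apply Continuous.subtype_mk
    refine continuous_pi fun n => continuous_pi fun c => ?_
    exact (ContinuousMap.const'.comp (X.map (Set.empty_subset _))).continuous

/-- A cube is `k`-cartesian if the canonical map from the initial space to the
homotopy limit of the punctured cube is `k`-connected. -/
def IsCartesianC {ι : Type*} (k : ℤ) (X : PCube ι) : Prop :=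
  ConnMap k (cubeAMap X)

end

noncomputable section

/-- The carrier of the homotopy colimit of a poset-indexed diagram: chains in the
poset together with a simplex parameter and a point in the space at the bottom of
the chain. -/
def HocolimCarrier {P : Type*} [PartialOrder P] (D : PDiagram P) : Type _ :=
  Σ (n : ℕ) (c : Fin (n + 1) →o P), (stdSimplex ℝ (Fin (n + 1)) : Set _) × D.obj (c 0)

/-- The gluing relation defining the homotopy colimit. -/
inductive HocolimRel {P : Type*} [PartialOrder P] (D : PDiagram P) :
    HocolimCarrier D → HocolimCarrier D → Prop
  | glue (m n : ℕ) (c : Fin (n + 1) →o P) (φ : Fin (m + 1) →o Fin (n + 1))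
      (t : (stdSimplex ℝ (Fin (m + 1)) : Set _)) (z : D.obj (c 0)) :
      HocolimRel D ⟨m, c.comp φ, (t, D.map (c.monotone (Fin.zero_le (φ 0))) z)⟩
        ⟨n, c, (simplexMap φ t, z)⟩

instance {P : Type*} [PartialOrder P] (D : PDiagram P) :
    TopologicalSpace (HocolimCarrier D) := by
  unfold HocolimCarrier; infer_instance

/-- The homotopy colimit of a poset-indexed diagram (the bar construction). -/
def Hocolim {P : Type*} [PartialOrder P] (D : PDiagram P) : Type _ :=
  Quot (HocolimRel D)

instance {P : Type*} [PartialOrder P] (D : PDiagram P) :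
    TopologicalSpace (Hocolim D) := by
  unfold Hocolim; infer_instance

/-- The poset of proper subsets of `ι`. -/
abbrev PrSet (ι : Type*) := { S : Set ι // S ≠ Set.univ }

/-- The inclusion of the proper subsets into all subsets. -/
def PrSet.incl (ι : Type*) : PrSet ι →o Set ι := ⟨Subtype.val, fun _ _ h => h⟩

/-- The canonical map from the homotopy colimit of the restriction of a cube to
proper subsets, to the final space of the cube. -/
def cubeBMap {ι : Type*} (X : PCube ι) :
    C(Hocolim (X.pull (PrSet.incl ι)), X.obj Set.univ) where
  toFun := Quot.lift (fun w => X.map (Set.subset_univ _) w.2.2.2) (by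
    rintro _ _ ⟨m, n, c, φ, t, z⟩
    show X.map _ (X.map _ z) = X.map _ z
    exact ((ContinuousMap.congr_fun (X.map_comp _ _) z).trans
      (ContinuousMap.comp_apply _ _ _)).symm)
  continuous_toFun := by
    apply continuous_quot_lift
    apply continuous_sigma
    intro n
    apply continuous_sigma
    intro c
    exact (X.map (Set.subset_univ _)).continuous.comp continuous_snd

/-- A cube is `k`-cocartesian if the canonical map from the homotopy colimit of the
restriction to proper subsets, to the final space, is `k`-connected. -/
def IsCocartesianC {ι : Type*} (k : ℤ) (X : PCube ι) : Prop :=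
  ConnMap k (cubeBMap X)

end

noncomputable section

/-- A (strictly natural) map of cubes of spaces. -/
structure CubeMap {ι : Type*} (X Y : PCube ι) where
  app : ∀ S : Set ι, C(X.obj S, Y.obj S)
  natural : ∀ ⦃S T : Set ι⦄ (h : S ⊆ T),
    (app T).comp (X.map h) = (Y.map h).comp (app S)

/-- The total diagram of a map of `ι`-cubes, indexed by `Set ι × Bool`: this realizes
a map of `r`-cubes as an `(r+1)`-cube. -/
def CubeMap.tdiag {ι : Type*} {X Y : PCube ι} (F : CubeMap X Y) :
    PDiagram (Set ι × Bool) where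
  obj p := match p with
    | (S, false) => X.obj S
    | (S, true) => Y.obj S
  topo p := match p with
    | (S, false) => X.topo S
    | (S, true) => Y.topo S
  map {p q} h := match p, q, h with
    | (S, false), (T, false), h => X.map h.1
    | (S, false), (_, true), h => (Y.map h.1).comp (F.app S)
    | (_, true), (_, true), h => Y.map h.1
    | (_, true), (_, false), h => absurd h.2 (by simp)
  map_id p := by
    rcases p with ⟨S, b⟩
    cases b
    · exact X.map_id S
    · exact Y.map_id S
  map_comp {p q r} h₁ h₂ := by
    rcases p with ⟨S, bp⟩; rcases q with ⟨T, bq⟩; rcases r with ⟨U, br⟩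
    cases bp <;> cases bq <;> cases br
    · exact X.map_comp h₁.1 h₂.1
    · show (Y.map (h₁.1.trans h₂.1)).comp (F.app S) =
        ((Y.map h₂.1).comp (F.app T)).comp (X.map h₁.1)
      rw [ContinuousMap.comp_assoc, F.natural h₁.1, ← ContinuousMap.comp_assoc,
        ← Y.map_comp]
    · exact absurd h₂.2 (by simp)
    · show (Y.map (h₁.1.trans h₂.1)).comp (F.app S) =
        (Y.map h₂.1).comp ((Y.map h₁.1).comp (F.app S))
      rw [Y.map_comp h₁.1 h₂.1, ContinuousMap.comp_assoc]
    · exact absurd h₁.2 (by simp)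
    · exact absurd h₁.2 (by simp)
    · exact absurd h₂.2 (by simp)
    · exact Y.map_comp h₁.1 h₂.1

/-- The poset of elements of `Set ι × Bool` other than the initial one `(∅, false)`. -/
abbrev TPunct (ι : Type*) := { p : Set ι × Bool // p ≠ (∅, false) }

/-- The inclusion of the punctured total poset. -/
def TPunct.incl (ι : Type*) : TPunct ι →o Set ι × Bool := ⟨Subtype.val, fun _ _ h => h⟩

/-- The canonical map from the initial space of the total cube of a cube map to the
homotopy limit of the punctured total cube. -/
def CubeMap.aMapT {ι : Type*} {X Y : PCube ι} (F : CubeMap X Y) :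
    C(X.obj ∅, Holim (F.tdiag.pull (TPunct.incl ι))) where
  toFun x := ⟨fun n c =>
      ContinuousMap.const _
        (F.tdiag.map (⟨Set.empty_subset _, Bool.false_le _⟩ :
          ((∅, false) : Set ι × Bool) ≤ ((c (Fin.last n)).1 : Set ι × Bool)) x), by
    intro m n c φ
    ext t
    simp only [ContinuousMap.comp_apply, ContinuousMap.const_apply]
    exact (ContinuousMap.congr_fun
      (F.tdiag.map_comp
        (⟨Set.empty_subset _, Bool.false_le _⟩ : ((∅, false) : Set ι × Bool) ≤
          ((c (φ (Fin.last m))).1 : Set ι × Bool))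
        (c.monotone (Fin.le_last (φ (Fin.last m))) :
          ((c (φ (Fin.last m))).1 : Set ι × Bool) ≤ ((c (Fin.last n)).1 : Set ι × Bool)))
      x).symm⟩
  continuous_toFun := by
    apply Continuous.subtype_mk
    refine continuous_pi fun n => continuous_pi fun c => ?_
    exact (ContinuousMap.const'.comp
      (F.tdiag.map (⟨Set.empty_subset _, Bool.false_le _⟩ :
        ((∅, false) : Set ι × Bool) ≤ ((c (Fin.last n)).1 : Set ι × Bool)))).continuous

/-- A map of `r`-cubes, considered as an `(r+1)`-cube, is `k`-cartesian. -/
def CubeMap.IsCartesian {ι : Type*} {X Y : PCube ι} (k : ℤ) (F : CubeMap X Y) : Prop :=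
  ConnMap k F.aMapT

end

noncomputable section

open unitInterval

/-- The cube of homotopy fibers of a cube map over a basepoint `y` of `Y(∅)`. -/
def CubeMap.fiberCube {ι : Type*} {X Y : PCube ι} (F : CubeMap X Y)
    (y : Y.obj ∅) : PCube ι where
  obj S := HoFiber (F.app S) (Y.map (Set.empty_subset S) y)
  topo _ := inferInstance
  map {S T} h :=
    { toFun := fun z => ⟨(X.map h z.1.1, (Y.map h).comp z.1.2), by
        constructor
        · show (Y.map h) (z.1.2 0) = _
          rw [z.2.1]
          exact (ContinuousMap.congr_fun (F.natural h) z.1.1).symm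
        · show (Y.map h) (z.1.2 1) = _
          rw [z.2.2, ← ContinuousMap.comp_apply, ← Y.map_comp]⟩
      continuous_toFun := by
        apply Continuous.subtype_mk
        exact ((X.map h).continuous.comp
            (continuous_fst.comp continuous_subtype_val)).prodMk
          ((Y.map h).continuous_postcomp.comp
            (continuous_snd.comp continuous_subtype_val)) }
  map_id S := by
    refine ContinuousMap.ext fun z => Subtype.ext (Prod.ext ?_ ?_)
    · show X.map (le_refl S) z.1.1 = z.1.1
      rw [X.map_id]; rfl
    · show (Y.map (le_refl S)).comp z.1.2 = z.1.2
      rw [Y.map_id]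
      exact ContinuousMap.id_comp _
  map_comp {S T U} h₁ h₂ := by
    refine ContinuousMap.ext fun z => Subtype.ext (Prod.ext ?_ ?_)
    · show X.map (h₁.trans h₂) z.1.1 = X.map h₂ (X.map h₁ z.1.1)
      rw [X.map_comp h₁ h₂]; rfl
    · show (Y.map (h₁.trans h₂)).comp z.1.2 =
        (Y.map h₂).comp ((Y.map h₁).comp z.1.2)
      rw [Y.map_comp h₁ h₂, ContinuousMap.comp_assoc]

/-- The subcube of a cube determined by a family of subsets preserved by the
structure maps. -/
def subCube {ι : Type*} (Y : PCube ι) (U : ∀ S : Set ι, Set (Y.obj S))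
    (hU : ∀ ⦃S T : Set ι⦄ (h : S ⊆ T), Set.MapsTo (Y.map h) (U S) (U T)) :
    PCube ι where
  obj S := U S
  topo _ := inferInstance
  map {S T} h :=
    { toFun := fun z => ⟨Y.map h z.1, hU h z.2⟩
      continuous_toFun :=
        Continuous.subtype_mk ((Y.map h).continuous.comp continuous_subtype_val) _ }
  map_id S := by
    ext z
    show Y.map (le_refl S) z.1 = z.1
    rw [Y.map_id]; rfl
  map_comp {S T V} h₁ h₂ := by
    ext z
    show Y.map (h₁.trans h₂) z.1 = Y.map h₂ (Y.map h₁ z.1)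
    rw [Y.map_comp h₁ h₂]; rfl

/-- The inclusion of a subcube, as a map of cubes. -/
def subCubeIncl {ι : Type*} (Y : PCube ι) (U : ∀ S : Set ι, Set (Y.obj S))
    (hU : ∀ ⦃S T : Set ι⦄ (h : S ⊆ T), Set.MapsTo (Y.map h) (U S) (U T)) :
    CubeMap (subCube Y U hU) Y where
  app S := ⟨Subtype.val, continuous_subtype_val⟩
  natural S T h := rfl

end

/-! Let `T` be the punctured total cube of `X → Y`, and `P` the homotopy pullback of
`holim X' → holim Y' ← Y ∅`, where `X'` and `Y'` are the cubes punctured at `∅`. A point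
`(z, y, δ)` of `P` glues to a point of `holim T`: it is `z` on chains in the `X`-part, `y` on
chains in the `Y`-part, and on a mixed chain it is the path `δ` evaluated at the barycentric
mass of the `X`-part of the simplex coordinate. Restricting to the `X`-part recovers `z`, and on
the image of `X ∅` in `P` the gluing is the canonical map `X ∅ → holim T`.

Given a sphere in a homotopy fibre of `X ∅ → holim X'`, push it into the corresponding fibre for
`Y` and fill it there. Sliding along the fibre paths and then contracting that filler turns
the sphere into one in a fibre of `X ∅ → holim T`, which is filled because `X → Y` is
`k`-cartesian. Restricting this filler to the `X`-part fills the original sphere up to a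
reparametrisation of its paths. -/

open ContinuousMap

noncomputable section

section SphereExtension

variable {j : ℕ}

def sphereIncl (j : ℕ) : C(USphere j, UDisk j) :=
  ⟨fun x => ⟨x.1, sphere_subset_closedBall x.2⟩, by fun_prop⟩

lemma sphereMapExtends_iff {Z : Type*} [TopologicalSpace Z] : SphereMapExtends j Z ↔
    ∀ φ : C(USphere j, Z), ∃ ψ : C(UDisk j, Z), ψ.comp (sphereIncl j) = φ := by
  simp only [SphereMapExtends, ContinuousMap.ext_iff]
  rfl

def diskCenter (j : ℕ) : UDisk j := ⟨0, mem_closedBall_self zero_le_one⟩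

def sphereContraction (j : ℕ) : Homotopy (sphereIncl j) (const _ (diskCenter j)) where
  toFun p := ⟨(1 - (p.1 : ℝ)) • p.2.1, by
    rw [mem_closedBall_zero_iff, norm_smul, mem_sphere_zero_iff_norm.1 p.2.2, mul_one,
      Real.norm_of_nonneg (sub_nonneg.2 p.1.2.2)]
    linarith [p.1.2.1]⟩
  continuous_toFun := by fun_prop
  map_zero_left x := by ext1; simp [sphereIncl]
  map_one_left x := by ext1; simp [diskCenter]

def diskDouble (j : ℕ) : C(UDisk j, UDisk j) where
  toFun d := ⟨(2 / max 1 (2 * ‖d.1‖)) • d.1, by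
    have hpos : (0 : ℝ) < max 1 (2 * ‖d.1‖) := lt_max_of_lt_left one_pos
    rw [mem_closedBall_zero_iff, norm_smul, Real.norm_of_nonneg (by positivity),
      div_mul_eq_mul_div, div_le_one hpos]
    exact le_max_right _ _⟩
  continuous_toFun := by
    have hmax : Continuous fun d : UDisk j => max 1 (2 * ‖d.1‖) := by fun_prop
    exact ((continuous_const.div hmax fun d => (lt_max_of_lt_left one_pos).ne').smul
      continuous_subtype_val).subtype_mk _

lemma diskDouble_apply_of_norm_eq {d : UDisk j} (hd : ‖d.1‖ = 1 / 2) :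
    (diskDouble j d).1 = (2 : ℝ) • d.1 := by
  simp only [diskDouble, coe_mk, hd]
  norm_num

def diskToSphere (j : ℕ) (d : UDisk j) : USphere j :=
  if h : d.1 = 0 then ⟨EuclideanSpace.single 0 1, by simp⟩
  else ⟨‖d.1‖⁻¹ • d.1, by
    rw [mem_sphere_zero_iff_norm, norm_smul, norm_inv, norm_norm,
      inv_mul_cancel₀ (norm_ne_zero_iff.2 h)]⟩

lemma diskToSphere_coe_of_ne {d : UDisk j} (hd : d.1 ≠ 0) :
    (diskToSphere j d).1 = ‖d.1‖⁻¹ • d.1 :=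
  congrArg Subtype.val (dif_neg hd)

lemma continuousOn_diskToSphere : ContinuousOn (diskToSphere j) {d | d.1 ≠ 0} := by
  rw [Topology.IsInducing.subtypeVal.continuousOn_iff]
  refine ContinuousOn.congr (f := fun d : UDisk j => ‖d.1‖⁻¹ • d.1) ?_ fun d hd => ?_
  · exact ContinuousOn.smul (ContinuousOn.inv₀ (by fun_prop) fun d hd => norm_ne_zero_iff.2 hd)
      (by fun_prop)
  · exact diskToSphere_coe_of_ne hd

theorem exists_extension_of_homotopy {Z : Type*} [TopologicalSpace Z]
    {φ₀ φ₁ : C(USphere j, Z)} (H : Homotopy φ₀ φ₁) {ψ : C(UDisk j, Z)}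
    (hψ : ψ.comp (sphereIncl j) = φ₁) :
    ∃ ψ₀ : C(UDisk j, Z), ψ₀.comp (sphereIncl j) = φ₀ := by
  -- `ψ` rescaled on the half-disk `‖d‖ ≤ 1/2`, `H` on the annulus (time `0` on the sphere)
  let time : UDisk j → I := fun d => Set.projIcc 0 1 zero_le_one (2 - 2 * ‖d.1‖)
  have htime : Continuous time := continuous_projIcc.comp (by fun_prop)
  have hsphere : ∀ d : UDisk j, 1 / 2 ≤ ‖d.1‖ → d.1 ≠ 0 := fun d hd h => by
    rw [h, norm_zero] at hd; norm_num at hd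
  have houter : ContinuousOn (fun d => H (time d, diskToSphere j d)) {d | 1 / 2 ≤ ‖d.1‖} :=
    H.continuous.comp_continuousOn
      (htime.continuousOn.prodMk (continuousOn_diskToSphere.mono fun d hd => hsphere d hd))
  refine ⟨⟨fun d => if ‖d.1‖ ≤ 1 / 2 then ψ (diskDouble j d)
      else H (time d, diskToSphere j d),
    continuous_if_le (by fun_prop) continuous_const
      (ψ.continuous.comp (diskDouble j).continuous).continuousOn houter fun d hd => ?_⟩, ?_⟩
  · have htime1 : time d = 1 := by
      simp only [time, hd]; norm_num
    rw [htime1, H.apply_one, ← hψ]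
    refine congrArg ψ (Subtype.ext ?_)
    rw [diskDouble_apply_of_norm_eq hd]
    change _ = (diskToSphere j d).1
    rw [diskToSphere_coe_of_ne (hsphere d hd.ge), hd]
    norm_num
  · ext x
    have hx : ‖x.1‖ = 1 := mem_sphere_zero_iff_norm.1 x.2
    have htime0 : time (sphereIncl j x) = 0 := by
      simp only [time, sphereIncl, coe_mk, hx]; norm_num
    have hproj : diskToSphere j (sphereIncl j x) = x := by
      refine Subtype.ext ?_
      rw [diskToSphere_coe_of_ne (hsphere _ (by simp [sphereIncl, hx]; norm_num))]
      simp [sphereIncl, hx]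
    change (if ‖x.1‖ ≤ 1 / 2 then _ else _) = _
    rw [if_neg (by rw [hx]; norm_num), htime0, hproj, H.apply_zero]

end SphereExtension

section HomotopyFiber

variable {A B C D E : Type*} [TopologicalSpace A] [TopologicalSpace B] [TopologicalSpace C]
  [TopologicalSpace D] [TopologicalSpace E]

def doubleSpeed : C(I, I) := ⟨fun s => Set.projIcc 0 1 zero_le_one (2 * (s : ℝ)), by fun_prop⟩

lemma doubleSpeed_of_le_half {s : I} (hs : (s : ℝ) ≤ 1 / 2) :
    doubleSpeed s = ⟨2 * s, (unitInterval.mul_pos_mem_iff zero_lt_two).2 ⟨s.2.1, hs⟩⟩ :=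
  Set.projIcc_of_mem zero_le_one _

lemma doubleSpeed_of_half_le {s : I} (hs : 1 / 2 ≤ (s : ℝ)) : doubleSpeed s = 1 :=
  Set.projIcc_of_right_le zero_le_one (by linarith)

@[simp] lemma doubleSpeed_zero : doubleSpeed 0 = 0 := by
  simpa using doubleSpeed_of_le_half (s := 0) (by norm_num)

@[simp] lemma doubleSpeed_one : doubleSpeed 1 = 1 := doubleSpeed_of_half_le (by norm_num)

def speedRamp : C(I, C(I, I)) :=
  ContinuousMap.curry ⟨fun p : I × I => Set.projIcc 0 1 zero_le_one ((1 + (p.1 : ℝ)) * p.2),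
    by fun_prop⟩

@[simp] lemma speedRamp_zero : speedRamp 0 = ContinuousMap.id I := by
  ext s; simp [speedRamp]

@[simp] lemma speedRamp_one : speedRamp 1 = doubleSpeed := by
  ext s; simp [speedRamp, doubleSpeed]; norm_num

@[simp] lemma speedRamp_apply_zero (u : I) : speedRamp u 0 = 0 := by
  ext; simp [speedRamp]

@[simp] lemma speedRamp_apply_one (u : I) : speedRamp u 1 = 1 :=
  Set.projIcc_of_right_le zero_le_one (by simp; exact u.2.1)

def pathPrefix : C(I, C(I, I)) := ContinuousMap.curry ⟨fun p : I × I => p.1 * p.2, by fun_prop⟩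

namespace HoFiber

def fst (f : C(A, B)) (z : B) : C(HoFiber f z, A) := ⟨fun x => x.1.1, by fun_prop⟩

def map {f : C(A, B)} {e : C(E, D)} {u : C(A, E)} {q : C(B, D)} (h : ∀ a, q (f a) = e (u a))
    {z : B} {y : D} (hy : q z = y) : C(HoFiber f z, HoFiber e y) where
  toFun x := ⟨(u x.1.1, q.comp x.1.2), by simp [x.2.1, h], by simp [x.2.2, hy]⟩
  continuous_toFun := by
    refine Continuous.subtype_mk (Continuous.prodMk ?_ ?_) _
    · fun_prop
    · exact q.continuous_postcomp.comp (by fun_prop)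

def ofHomotopy {X : Type*} [TopologicalSpace X] {g : C(A, C)} {w : C} (a : C(X, A))
    (H : Homotopy (g.comp a) (const X w)) : C(X, HoFiber g w) where
  toFun x := ⟨(a x, (H.toContinuousMap.comp prodSwap).curry x), H.apply_zero x, H.apply_one x⟩
  continuous_toFun := by
    refine Continuous.subtype_mk (Continuous.prodMk ?_ ?_) _
    · fun_prop
    · exact ((H.toContinuousMap.comp prodSwap).curry).continuous

def speedUp (f : C(A, B)) (z : B) : C(HoFiber f z, HoFiber f z) where
  toFun x := ⟨(x.1.1, x.1.2.comp doubleSpeed), by simpa using x.2.1, by simpa using x.2.2⟩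
  continuous_toFun := by
    refine Continuous.subtype_mk (Continuous.prodMk ?_ ?_) _
    · fun_prop
    · exact (ContinuousMap.continuous_precomp doubleSpeed).comp (by fun_prop)

def speedUpHomotopy (f : C(A, B)) (z : B) : Homotopy (ContinuousMap.id _) (speedUp f z) where
  toFun p := ⟨(p.2.1.1, p.2.1.2.comp (speedRamp p.1)), by simpa using p.2.2.1, by
    simpa using p.2.2.2⟩
  continuous_toFun := by
    refine Continuous.subtype_mk (Continuous.prodMk ?_ ?_) _
    · fun_prop
    · exact ContinuousMap.continuous_comp'.comp
        ((speedRamp.continuous.comp continuous_fst).prodMk (by fun_prop))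
  map_zero_left x := by
    ext1; simp
  map_one_left x := by
    ext1; simp [speedUp]

end HoFiber

abbrev HoPullback (q : C(B, D)) (e : C(E, D)) : Type _ :=
  { p : B × E × C(I, D) // p.2.2 0 = e p.2.1 ∧ p.2.2 1 = q p.1 }

namespace HoPullback

variable {f : C(A, B)} {q : C(B, D)} {e : C(E, D)} {u : C(A, E)}

def lift (h : ∀ a, q (f a) = e (u a)) : C(A, HoPullback q e) where
  toFun a := ⟨(f a, u a, const I (e (u a))), rfl, (h a).symm⟩
  continuous_toFun := by
    refine Continuous.subtype_mk (Continuous.prodMk ?_ (Continuous.prodMk ?_ ?_)) _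
    · fun_prop
    · fun_prop
    · exact continuous_const'.comp (by fun_prop)

def ofHoFiber (q : C(B, D)) (e : C(E, D)) (z : B) : C(HoFiber e (q z), HoPullback q e) where
  toFun y := ⟨(z, y.1.1, y.1.2), y.2⟩
  continuous_toFun := by
    refine Continuous.subtype_mk (Continuous.prodMk continuous_const ?_) _
    fun_prop

def homotopyAlongFiber (h : ∀ a, q (f a) = e (u a)) (z : B) :
    Homotopy ((lift h).comp (HoFiber.fst f z)) ((ofHoFiber q e z).comp (HoFiber.map h rfl)) where
  toFun p := ⟨(p.2.1.2 p.1, u p.2.1.1, (q.comp p.2.1.2).comp (pathPrefix p.1)), by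
    simp [pathPrefix, p.2.2.1, h], by simp [pathPrefix]⟩
  continuous_toFun := by
    refine Continuous.subtype_mk (Continuous.prodMk ?_ (Continuous.prodMk ?_ ?_)) _
    · fun_prop
    · fun_prop
    · exact ContinuousMap.continuous_comp'.comp
        ((pathPrefix.continuous.comp continuous_fst).prodMk
          (q.continuous_postcomp.comp (by fun_prop)))
  map_zero_left x := by
    refine Subtype.ext (Prod.ext x.2.1 (Prod.ext rfl ?_))
    ext s
    simp [pathPrefix, x.2.1, h, lift, HoFiber.fst]
  map_one_left x := by
    refine Subtype.ext (Prod.ext x.2.2 (Prod.ext rfl ?_))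
    ext s
    simp [pathPrefix, ofHoFiber, HoFiber.map]

end HoPullback

variable {f : C(A, B)} {q : C(B, D)} {e : C(E, D)} {u : C(A, E)} {g : C(A, C)} {r : C(C, B)}

theorem sphereMapExtends_hoFiber_of_hoPullback (h : ∀ a, q (f a) = e (u a))
    (W : C(HoPullback q e, C)) (hrW : ∀ p, r (W p) = p.1.1)
    (hWlift : W.comp (HoPullback.lift h) = g) {j : ℕ} (z : B)
    (he : SphereMapExtends j (HoFiber e (q z)))
    (hg : ∀ w, SphereMapExtends j (HoFiber g w)) : SphereMapExtends j (HoFiber f z) := by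
  have hrg : ∀ a, r (g a) = f a := fun a => by rw [← hWlift]; exact hrW _
  simp only [sphereMapExtends_iff] at he hg ⊢
  intro φ
  obtain ⟨ζ, hζ⟩ := he ((HoFiber.map h rfl).comp φ)
  set toP := HoPullback.ofHoFiber q e z
  set w := W (toP (ζ (diskCenter j)))
  let slide : ContinuousMap.Homotopy (g.comp ((HoFiber.fst f z).comp φ))
      ((W.comp toP).comp (ζ.comp (sphereIncl j))) :=
    ((ContinuousMap.Homotopy.refl W).comp
      ((HoPullback.homotopyAlongFiber h z).compContinuousMap φ)).cast
      (by rw [← hWlift]; rfl) (by rw [hζ]; rfl)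
  let contract : ContinuousMap.Homotopy ((W.comp toP).comp (ζ.comp (sphereIncl j))) (const _ w) :=
    ((ContinuousMap.Homotopy.refl ((W.comp toP).comp ζ)).comp (sphereContraction j)).cast rfl rfl
  obtain ⟨Ψ, hΨ⟩ := hg w (HoFiber.ofHomotopy _ (slide.trans contract))
  refine exists_extension_of_homotopy ((HoFiber.speedUpHomotopy f z).compContinuousMap φ)
    (ψ := (HoFiber.map (u := ContinuousMap.id A) hrg (hrW _)).comp Ψ) ?_
  -- on the sphere, the projected filler is `φ` with its paths run at double speed
  ext1 ξ
  have hΨξ : Ψ (sphereIncl j ξ) = _ := congrArg (· ξ) hΨ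
  refine Subtype.ext (Prod.ext ?_ ?_)
  · change (Ψ (sphereIncl j ξ)).1.1 = (φ ξ).1.1
    rw [hΨξ]
    rfl
  · change r.comp (Ψ (sphereIncl j ξ)).1.2 = (φ ξ).1.2.comp doubleSpeed
    rw [hΨξ]
    ext s
    change r ((slide.trans contract) (s, ξ)) = (φ ξ).1.2 (doubleSpeed s)
    rw [ContinuousMap.Homotopy.trans_apply]
    split_ifs with hs
    · rw [doubleSpeed_of_le_half hs]
      exact hrW _
    · rw [doubleSpeed_of_half_le (le_of_not_ge hs), (φ ξ).2.2]
      exact hrW _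

theorem connMap_of_hoPullback {k : ℤ} (h : ∀ a, q (f a) = e (u a))
    (W : C(HoPullback q e, C)) (hrW : ∀ p, r (W p) = p.1.1)
    (hWlift : W.comp (HoPullback.lift h) = g) (he : ConnMap k e) (hg : ConnMap k g) :
    ConnMap k f := by
  have hrg : ∀ a, r (g a) = f a := fun a => by rw [← hWlift]; exact hrW _
  intro z
  refine ⟨fun hk => ?_, fun j hj => ?_⟩
  · obtain ⟨y⟩ := (he (q z)).1 hk
    obtain ⟨x⟩ := (hg (W (HoPullback.ofHoFiber q e z y))).1 hk
    exact ⟨HoFiber.map (u := ContinuousMap.id A) hrg (hrW _) x⟩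
  · exact sphereMapExtends_hoFiber_of_hoPullback h W hrW hWlift z ((he (q z)).2 j hj)
      fun w => (hg w).2 j hj

end HomotopyFiber

lemma ContinuousAt.eval_of_isConst {P K Z : Type*} [TopologicalSpace P] [TopologicalSpace K]
    [TopologicalSpace Z] [CompactSpace K] {G : P → C(K, Z)} {p : P} (hG : ContinuousAt G p)
    (hconst : ∀ x x', G p x = G p x') (N : P → K) : ContinuousAt (fun q => G q (N q)) p := by
  rw [ContinuousAt, _root_.tendsto_nhds]
  intro V hV hmem
  have hmaps : Set.MapsTo (G p) Set.univ V := fun x _ => hconst (N p) x ▸ hmem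
  filter_upwards [hG.preimage_mem_nhds
    ((ContinuousMap.isOpen_setOfPred_mapsTo isCompact_univ hV).mem_nhds hmaps)] with q hq
  exact hq (Set.mem_univ _)

abbrev Simplex (n : ℕ) : Type := (stdSimplex ℝ (Fin (n + 1)) : Set _)

lemma simplexMap_apply {m n : ℕ} (φ : Fin m → Fin n) (t : (stdSimplex ℝ (Fin m) : Set _))
    (j : Fin n) : (simplexMap φ t).1 j = ∑ l ∈ Finset.univ.filter (fun l => φ l = j), t.1 l :=
  rfl

def Fin.clampHom {m : ℕ} (i : Fin (m + 1)) : Fin (m + 1) →o Fin (m + 1) :=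
  ⟨fun l => min l i, fun _ _ h => min_le_min h le_rfl⟩

lemma simplexMap_clampHom {m : ℕ} (i : Fin (m + 1)) (x : Simplex m)
    (hx : ∀ l, i < l → x.1 l = 0) : simplexMap (Fin.clampHom i) x = x := by
  refine Subtype.ext (funext fun j => ?_)
  rw [simplexMap_apply]
  by_cases hj : j ≤ i
  · refine Finset.sum_eq_single_of_mem j
      (Finset.mem_filter.2 ⟨Finset.mem_univ _, min_eq_left hj⟩) fun l hl hlj => hx l ?_
    have hli : min l i = j := (Finset.mem_filter.1 hl).2
    by_contra hle
    exact hlj (by rwa [min_eq_left (not_lt.1 hle)] at hli)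
  · rw [hx j (not_le.1 hj), Finset.sum_eq_zero]
    intro l hl
    exact absurd ((Finset.mem_filter.1 hl).2 ▸ min_le_right l i) hj

lemma PDiagram.map_map {P : Type*} [PartialOrder P] (D : PDiagram P) {p q r : P}
    (h₁ : p ≤ q) (h₂ : q ≤ r) (a : D.obj p) :
    D.map h₂ (D.map h₁ a) = D.map (h₁.trans h₂) a := by
  rw [D.map_comp h₁ h₂, ContinuousMap.comp_apply]

lemma Holim.map_apply_congr {P : Type*} [PartialOrder P] {D : PDiagram P} (f : Holim D)
    {n : ℕ} {c c' : Fin (n + 1) →o P} (h : c = c') (x : Simplex n) {r : P}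
    (hc : c (Fin.last n) ≤ r) (hc' : c' (Fin.last n) ≤ r) :
    D.map hc (f.1 n c x) = D.map hc' (f.1 n c' x) := by
  subst h
  rfl

lemma Holim.apply_eq_map_clampHom {P : Type*} [PartialOrder P] {D : PDiagram P} (w : Holim D)
    {m : ℕ} (c : Fin (m + 1) →o P) (i : Fin (m + 1)) {x : Simplex m}
    (hx : ∀ l, i < l → x.1 l = 0) :
    w.1 m c x = D.map (c.monotone (min_le_left _ _)) (w.1 m (c.comp (Fin.clampHom i)) x) := by
  calc w.1 m c x = w.1 m c (simplexMap (Fin.clampHom i) x) := by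
        rw [simplexMap_clampHom i x hx]
    _ = _ := (ContinuousMap.congr_fun (w.2 m m c (Fin.clampHom i)) x).symm

namespace TPunct

variable {ι : Type*} {n : ℕ}

def inY (c : Fin (n + 1) →o TPunct ι) (j : Fin (n + 1)) : Bool := (c j).1.2

variable (c : Fin (n + 1) →o TPunct ι)

lemma inY_mono {j j' : Fin (n + 1)} (h : j ≤ j') : inY c j ≤ inY c j' := (c.monotone h).2

lemma inY_eq_false_of_le {j j' : Fin (n + 1)} (h : j ≤ j') (h' : inY c j' = false) :
    inY c j = false :=
  Bool.eq_false_of_le_false (h' ▸ inY_mono c h)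

lemma inY_eq_true_of_le {j j' : Fin (n + 1)} (h : j ≤ j') (hj : inY c j = true) :
    inY c j' = true :=
  top_le_iff.1 (le_of_eq_of_le hj.symm (inY_mono c h))

lemma nonempty_of_inY_eq_false {j : Fin (n + 1)} (hj : inY c j = false) : (c j).1.1.Nonempty :=
  Set.nonempty_iff_ne_empty.2 fun h => (c j).2 (Prod.ext h hj)

def xIdx : Finset (Fin (n + 1)) := Finset.univ.filter (inY c · = false)

lemma mem_xIdx {j : Fin (n + 1)} : j ∈ xIdx c ↔ inY c j = false := by simp [xIdx]

def lastX (h0 : inY c 0 = false) : Fin (n + 1) := (xIdx c).max' ⟨0, (mem_xIdx c).2 h0⟩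

lemma le_lastX_iff (h0 : inY c 0 = false) {j : Fin (n + 1)} :
    j ≤ lastX c h0 ↔ inY c j = false :=
  ⟨fun h => inY_eq_false_of_le c h ((mem_xIdx c).1 ((xIdx c).max'_mem _)),
    fun h => (xIdx c).le_max' j ((mem_xIdx c).2 h)⟩

def xPart (h0 : inY c 0 = false) : Fin (n + 1) →o NESet ι where
  toFun j := ⟨(c (min j (lastX c h0))).1.1,
    nonempty_of_inY_eq_false c ((le_lastX_iff c h0).1 (min_le_right _ _))⟩
  monotone' _ _ h := (c.monotone (min_le_min h le_rfl)).1

def allX (hl : inY c (Fin.last n) = false) : Fin (n + 1) →o NESet ι where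
  toFun j := ⟨(c j).1.1, nonempty_of_inY_eq_false c (inY_eq_false_of_le c (Fin.le_last j) hl)⟩
  monotone' _ _ h := (c.monotone h).1

def xMass (t : Simplex n) : I :=
  ⟨∑ j ∈ xIdx c, t.1 j, Finset.sum_nonneg fun j _ => t.2.1 j, by
    simpa [t.2.2] using Finset.sum_le_sum_of_subset_of_nonneg (xIdx c).subset_univ
      fun j _ _ => t.2.1 j⟩

lemma continuous_xMass : Continuous (xMass c) :=
  Continuous.subtype_mk
    (continuous_finsetSum _ fun j _ => (continuous_apply j).comp continuous_subtype_val) _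

lemma xMass_simplexMap {m : ℕ} (φ : Fin (m + 1) →o Fin (n + 1)) (t : Simplex m) :
    xMass c (simplexMap φ t) = xMass (c.comp φ) t := by
  refine Subtype.ext ?_
  simp only [xMass, simplexMap_apply]
  rw [Finset.sum_fiberwise_eq_sum_filter]
  exact Finset.sum_congr (Finset.filter_congr fun l _ => mem_xIdx c) fun _ _ => rfl

lemma xMass_eq_one (hl : inY c (Fin.last n) = false) (t : Simplex n) : xMass c t = 1 := by
  have hx : xIdx c = Finset.univ :=
    Finset.filter_true_of_mem fun j _ => inY_eq_false_of_le c (Fin.le_last j) hl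
  exact Subtype.ext (by simp [xMass, hx, t.2.2])

lemma xMass_eq_zero (h0 : inY c 0 = true) (t : Simplex n) : xMass c t = 0 := by
  have hx : xIdx c = ∅ := Finset.filter_false_of_mem fun j _ => by
    simp [inY_eq_true_of_le c (Fin.zero_le j) h0]
  exact Subtype.ext (by simp [xMass, hx])

lemma coe_xMass_ne_zero {t : Simplex n} (hv : xMass c t ≠ 0) : (xMass c t : ℝ) ≠ 0 :=
  fun h => hv (Subtype.ext h)

/-- The vertex taken at mass zero is arbitrary: there `glueVal` evaluates a constant family. -/
def normalizeX (t : Simplex n) : Simplex n :=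
  if hv : xMass c t = 0 then ⟨Pi.single 0 1, single_mem_stdSimplex ℝ 0⟩ else
    ⟨fun j => if inY c j = false then t.1 j / xMass c t else 0,
      fun j => by
        dsimp only
        split
        · exact div_nonneg (t.2.1 j) (xMass c t).2.1
        · exact le_rfl,
      by
        rw [← Finset.sum_filter, ← Finset.sum_div]
        exact div_self (coe_xMass_ne_zero c hv)⟩

lemma normalizeX_apply_of_ne {t : Simplex n} (hv : xMass c t ≠ 0) (j : Fin (n + 1)) :
    (normalizeX c t).1 j = if inY c j = false then t.1 j / xMass c t else 0 := by
  rw [normalizeX, dif_neg hv]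

lemma normalizeX_apply_of_inY (h0 : inY c 0 = false) (t : Simplex n) {j : Fin (n + 1)}
    (hj : inY c j = true) : (normalizeX c t).1 j = 0 := by
  unfold normalizeX
  split
  · exact Pi.single_eq_of_ne (by rintro rfl; simp [h0] at hj) _
  · simp [hj]

lemma normalizeX_eq_self {t : Simplex n} (hv : xMass c t = 1)
    (hY : ∀ j, inY c j = true → t.1 j = 0) : normalizeX c t = t := by
  refine Subtype.ext (funext fun j => ?_)
  rw [normalizeX_apply_of_ne c (by simp [hv]), hv]
  split_ifs with hj
  · simp
  · exact (hY j (Bool.of_not_eq_false hj)).symm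

lemma normalizeX_simplexMap {m : ℕ} (φ : Fin (m + 1) →o Fin (n + 1)) {t : Simplex m}
    (hv : xMass (c.comp φ) t ≠ 0) :
    normalizeX c (simplexMap φ t) = simplexMap φ (normalizeX (c.comp φ) t) := by
  have hv' : xMass c (simplexMap φ t) ≠ 0 := by rwa [xMass_simplexMap]
  refine Subtype.ext (funext fun j => ?_)
  rw [normalizeX_apply_of_ne c hv', simplexMap_apply, xMass_simplexMap, simplexMap_apply]
  have hfib : ∀ l ∈ Finset.univ.filter (fun l => φ l = j), (normalizeX (c.comp φ) t).1 l =
      if inY c j = false then t.1 l / xMass (c.comp φ) t else 0 := by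
    intro l hl
    rw [normalizeX_apply_of_ne _ hv, ← (Finset.mem_filter.1 hl).2]
    rfl
  rw [Finset.sum_congr rfl hfib]
  split
  · rw [Finset.sum_div]
  · simp

lemma continuousAt_normalizeX {t : Simplex n} (hv : xMass c t ≠ 0) :
    ContinuousAt (normalizeX c) t := by
  rw [Topology.IsInducing.subtypeVal.continuousAt_iff]
  have hopen : IsOpen {s : Simplex n | xMass c s ≠ 0} :=
    isOpen_ne_fun (continuous_xMass c) continuous_const
  refine ContinuousAt.congr (f := fun s j => if inY c j = false then s.1 j / xMass c s else 0)
    ?_ ?_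
  · refine continuousAt_pi.2 fun j => ?_
    split
    · exact ((continuous_apply j).comp continuous_subtype_val).continuousAt.div
        (continuous_subtype_val.comp (continuous_xMass c)).continuousAt
        (coe_xMass_ne_zero c hv)
    · exact continuousAt_const
  · filter_upwards [hopen.mem_nhds hv] with s hs
    exact funext fun j => (normalizeX_apply_of_ne c hs j).symm

end TPunct

def NESet.toTPunct {ι : Type*} {n : ℕ} (c : Fin (n + 1) →o NESet ι) :
    Fin (n + 1) →o TPunct ι where
  toFun j := ⟨((c j).1, false), fun h => (c j).2.ne_empty (congrArg Prod.fst h)⟩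
  monotone' _ _ h := ⟨c.monotone h, le_rfl⟩

namespace CubeMap

open TPunct

variable {ι : Type*} {X Y : PCube ι} (F : CubeMap X Y)

def ofX {p : Set ι × Bool} (hp : p.2 = false) : C(X.obj p.1, F.tdiag.obj p) :=
  match p, hp with
  | (_, false), _ => ContinuousMap.id _

def ofY {p : Set ι × Bool} (hp : p.2 = true) : C(Y.obj p.1, F.tdiag.obj p) :=
  match p, hp with
  | (_, true), _ => ContinuousMap.id _

variable {F}

lemma tdiag_map_ofX_of_false {p q : Set ι × Bool} (h : p ≤ q) (hp : p.2 = false)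
    (hq : q.2 = false) (x : X.obj p.1) :
    F.tdiag.map h (F.ofX hp x) = F.ofX hq (X.map h.1 x) := by
  obtain ⟨S, _ | _⟩ := p <;> obtain ⟨T, _ | _⟩ := q <;> first | rfl | simp at hp hq

lemma tdiag_map_ofX_of_true {p q : Set ι × Bool} (h : p ≤ q) (hp : p.2 = false)
    (hq : q.2 = true) (x : X.obj p.1) :
    F.tdiag.map h (F.ofX hp x) = F.ofY hq (Y.map h.1 (F.app p.1 x)) := by
  obtain ⟨S, _ | _⟩ := p <;> obtain ⟨T, _ | _⟩ := q <;> first | rfl | simp at hp hq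

lemma tdiag_map_ofY {p q : Set ι × Bool} (h : p ≤ q) (hp : p.2 = true)
    (hq : q.2 = true) (y : Y.obj p.1) :
    F.tdiag.map h (F.ofY hp y) = F.ofY hq (Y.map h.1 y) := by
  obtain ⟨S, _ | _⟩ := p <;> obtain ⟨T, _ | _⟩ := q <;> first | rfl | simp at hp hq

variable (F)

def holimPunctMap : C(Holim (X.pull (NESet.incl ι)), Holim (Y.pull (NESet.incl ι))) where
  toFun w := ⟨fun n c => (F.app (c (Fin.last n)).1).comp (w.1 n c), fun m n c φ => by
    ext t
    exact (ContinuousMap.congr_fun (F.natural _) _).symm.trans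
      (congrArg (F.app _) (ContinuousMap.congr_fun (w.2 m n c φ) t))⟩
  continuous_toFun := by
    refine Continuous.subtype_mk (continuous_pi fun n => continuous_pi fun c => ?_) _
    exact (F.app _).continuous_postcomp.comp
      ((continuous_apply c).comp ((continuous_apply n).comp continuous_subtype_val))

lemma holimPunctMap_cubeAMap (x : X.obj ∅) :
    F.holimPunctMap (cubeAMap X x) = cubeAMap Y (F.app ∅ x) := by
  refine Subtype.ext (funext fun n => funext fun c => ?_)
  ext t
  exact ContinuousMap.congr_fun (F.natural _) x

def restrictX : C(Holim (F.tdiag.pull (TPunct.incl ι)), Holim (X.pull (NESet.incl ι))) where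
  toFun w := ⟨fun n c => w.1 n (NESet.toTPunct c),
    fun m n c φ => w.2 m n (NESet.toTPunct c) φ⟩
  continuous_toFun := by
    refine Continuous.subtype_mk (continuous_pi fun n => continuous_pi fun c => ?_) _
    exact (continuous_apply _).comp ((continuous_apply n).comp continuous_subtype_val)

variable {F}

lemma app_map {S T : Set ι} (h : S ⊆ T) (x : X.obj S) :
    F.app T (X.map h x) = Y.map h (F.app S x) :=
  ContinuousMap.congr_fun (F.natural h) x

abbrev Gluing (F : CubeMap X Y) : Type _ := HoPullback F.holimPunctMap (cubeAMap Y)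

/-- Here `q = (z, y, δ)`; on a mixed chain, `δ` is taken at the mass of the `X`-part of `t`. -/
def glueVal (q : F.Gluing) {n : ℕ} (c : Fin (n + 1) →o TPunct ι) (t : Simplex n) :
    F.tdiag.obj (c (Fin.last n)).1 :=
  if hl : inY c (Fin.last n) = false then F.ofX hl (q.1.1.1 n (allX c hl) t)
  else if h0 : inY c 0 = false then
    F.ofY (Bool.of_not_eq_false hl) (Y.map (c.monotone (min_le_left _ _)).1
      ((q.1.2.2 (xMass c t)).1 n (xPart c h0) (normalizeX c t)))
  else F.ofY (Bool.of_not_eq_false hl) (Y.map (Set.empty_subset _) q.1.2.1)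

variable (q : F.Gluing) {n : ℕ} (c : Fin (n + 1) →o TPunct ι) (t : Simplex n)

lemma glueVal_of_allX (hl : inY c (Fin.last n) = false) :
    glueVal q c t = F.ofX hl (q.1.1.1 n (allX c hl) t) :=
  dif_pos hl

lemma glueVal_of_mixed (hl : inY c (Fin.last n) = true) (h0 : inY c 0 = false) :
    glueVal q c t = F.ofY hl (Y.map (c.monotone (min_le_left _ _)).1
      ((q.1.2.2 (xMass c t)).1 n (xPart c h0) (normalizeX c t))) := by
  rw [glueVal, dif_neg (by simp [hl]), dif_pos h0]

lemma glueVal_of_allY (hl : inY c (Fin.last n) = true) (h0 : inY c 0 = true) :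
    glueVal q c t = F.ofY hl (Y.map (Set.empty_subset _) q.1.2.1) := by
  rw [glueVal, dif_neg (by simp [hl]), dif_neg (by simp [h0])]

lemma continuous_glueVal :
    Continuous fun p : F.Gluing × Simplex n => glueVal p.1 c p.2 := by
  by_cases hl : inY c (Fin.last n) = false
  · simp only [glueVal_of_allX _ c _ hl]
    refine (F.ofX hl).continuous.comp (ContinuousEval.continuous_eval.comp
      (Continuous.prodMk ?_ continuous_snd))
    exact (continuous_apply _).comp ((continuous_apply n).comp
      (continuous_subtype_val.comp (by fun_prop)))
  have hl' := Bool.of_not_eq_false hl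
  by_cases h0 : inY c 0 = false
  · simp only [glueVal_of_mixed _ c _ hl' h0]
    refine (F.ofY hl').continuous.comp ((Y.map _).continuous.comp ?_)
    have hG : Continuous fun p : F.Gluing × Simplex n =>
        (p.1.1.2.2 (xMass c p.2)).1 n (xPart c h0) := by
      refine (continuous_apply _).comp ((continuous_apply n).comp
        (continuous_subtype_val.comp ?_))
      exact ContinuousEval.continuous_eval.comp (Continuous.prodMk (by fun_prop)
        ((continuous_xMass c).comp continuous_snd))
    refine continuous_iff_continuousAt.2 fun p => ?_
    by_cases hv : xMass c p.2 = 0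
    · -- at mass zero `δ 0` is the constant family at `y`, so the coordinate does not matter
      refine hG.continuousAt.eval_of_isConst (fun x x' => ?_) _
      simp only [hv, p.1.2.1]
      rfl
    · exact ContinuousEval.continuous_eval.continuousAt.comp
        (hG.continuousAt.prodMk ((continuousAt_normalizeX c hv).comp continuous_snd.continuousAt))
  · simp only [glueVal_of_allY _ c _ hl' (Bool.of_not_eq_false h0)]
    exact (F.ofY hl').continuous.comp ((Y.map _).continuous.comp (by fun_prop))

variable {m : ℕ} (φ : Fin (m + 1) →o Fin (n + 1)) (t : Simplex m)

lemma glueVal_simplexMap_of_allX (hl : inY c (Fin.last n) = false) :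
    F.tdiag.map (c.monotone (Fin.le_last (φ (Fin.last m)))) (glueVal q (c.comp φ) t) =
      glueVal q c (simplexMap φ t) := by
  have hφl : inY (c.comp φ) (Fin.last m) = false := inY_eq_false_of_le c (Fin.le_last _) hl
  rw [glueVal_of_allX _ _ _ hφl, glueVal_of_allX _ _ _ hl]
  exact (tdiag_map_ofX_of_false _ hφl hl _).trans
    (congrArg _ (ContinuousMap.congr_fun (q.1.1.2 m n (allX c hl) φ) t))

lemma glueVal_simplexMap_of_mixed_allX (hl : inY c (Fin.last n) = true)
    (hφl : inY (c.comp φ) (Fin.last m) = false) :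
    F.tdiag.map (c.monotone (Fin.le_last (φ (Fin.last m)))) (glueVal q (c.comp φ) t) =
      glueVal q c (simplexMap φ t) := by
  have h0 : inY c 0 = false := inY_eq_false_of_le c (Fin.zero_le _) hφl
  have hall : ∀ l, inY c (φ l) = false := fun l =>
    inY_eq_false_of_le (c.comp φ) (Fin.le_last l) hφl
  have hmass : xMass c (simplexMap φ t) = 1 := by
    rw [xMass_simplexMap, xMass_eq_one _ hφl]
  have hnorm : normalizeX c (simplexMap φ t) = simplexMap φ t := by
    refine normalizeX_eq_self c hmass fun j hj =>
      (simplexMap_apply _ _ _).trans (Finset.sum_eq_zero fun l hl => ?_)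
    rw [← (Finset.mem_filter.1 hl).2, hall l] at hj
    exact absurd hj (by decide)
  have hchain : (xPart c h0).comp φ = allX (c.comp φ) hφl := by
    refine OrderHom.ext _ _ (funext fun l => Subtype.ext ?_)
    change (c (min (φ l) (lastX c h0))).1.1 = (c (φ l)).1.1
    rw [min_eq_left ((le_lastX_iff c h0).2 (hall l))]
  have hle :=
    (c.monotone (le_min (Fin.le_last _) ((le_lastX_iff c h0).2 (hall (Fin.last m))))).1
  have hz : X.map hle (q.1.1.1 m (allX (c.comp φ) hφl) t) =
      q.1.1.1 n (xPart c h0) (simplexMap φ t) :=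
    (Holim.map_apply_congr q.1.1 hchain t ((xPart c h0).monotone (Fin.le_last _)) hle).symm.trans
      (ContinuousMap.congr_fun (q.1.1.2 m n (xPart c h0) φ) t)
  rw [glueVal_of_allX _ _ _ hφl, glueVal_of_mixed _ _ _ hl h0, hmass, q.2.2, hnorm]
  refine (tdiag_map_ofX_of_true _ hφl hl _).trans (congrArg _ ?_)
  change _ = Y.map _ (F.app _ (q.1.1.1 n (xPart c h0) (simplexMap φ t)))
  rw [← hz]
  exact (Y.map_map hle _ _).symm.trans (congrArg (Y.map _) (CubeMap.app_map hle _).symm)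

lemma glueVal_simplexMap_of_mixed (hl : inY c (Fin.last n) = true)
    (hφl : inY (c.comp φ) (Fin.last m) = true) (hφ0 : inY (c.comp φ) 0 = false) :
    F.tdiag.map (c.monotone (Fin.le_last (φ (Fin.last m)))) (glueVal q (c.comp φ) t) =
      glueVal q c (simplexMap φ t) := by
  have h0 : inY c 0 = false := inY_eq_false_of_le c (Fin.zero_le _) hφ0
  rw [glueVal_of_mixed _ _ _ hφl hφ0, glueVal_of_mixed _ _ _ hl h0, xMass_simplexMap]
  refine (tdiag_map_ofY _ hφl hl _).trans (congrArg _ ?_)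
  by_cases hv : xMass (c.comp φ) t = 0
  · rw [hv, q.2.1]
    change Y.map _ (Y.map _ (Y.map _ q.1.2.1)) = Y.map _ (Y.map _ q.1.2.1)
    exact ((Y.map_map _ _ _).trans (Y.map_map _ _ _)).trans (Y.map_map _ _ _).symm
  set w := q.1.2.2 (xMass (c.comp φ) t)
  set N := normalizeX (c.comp φ) t
  set i := lastX (c.comp φ) hφ0
  rw [normalizeX_simplexMap c φ hv]
  have hφle : ∀ l, φ l ≤ lastX c h0 ↔ l ≤ i := fun l =>
    (le_lastX_iff c h0).trans (le_lastX_iff (c.comp φ) hφ0).symm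
  have hchain : ((xPart c h0).comp φ).comp (Fin.clampHom i) = xPart (c.comp φ) hφ0 := by
    refine OrderHom.ext _ _ (funext fun l => Subtype.ext ?_)
    change (c (min (φ (min l i)) (lastX c h0))).1.1 = (c (φ (min l i))).1.1
    rw [min_eq_left ((hφle _).2 (min_le_right l i))]
  -- `N` vanishes beyond `i`, the only place where the chains in `hchain` differ before clamping
  have hsupp : ∀ l, i < l → N.1 l = 0 := fun l hl' => normalizeX_apply_of_inY _ hφ0 t
    (Bool.of_not_eq_false (mt (le_lastX_iff _ hφ0).2 (not_le.2 hl')))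
  have e1 := (ContinuousMap.congr_fun (w.2 m n (xPart c h0) φ) N).symm
  have e2 := Holim.apply_eq_map_clampHom w ((xPart c h0).comp φ) i hsupp
  have e3 := Holim.map_apply_congr w hchain N
    (((xPart c h0).comp φ).monotone (Fin.le_last _))
    (c.monotone (le_min (φ.monotone (min_le_left _ _)) ((hφle _).2 (min_le_right _ _)))).1
  refine Eq.trans ?_ (congrArg (Y.map _) (e1.trans (congrArg (Y.map _) (e2.trans e3))).symm)
  exact (Y.map_map _ _ _).trans ((Y.map_map _ _ _).trans (Y.map_map _ _ _)).symm

lemma glueVal_simplexMap_of_allY (hφ0 : inY (c.comp φ) 0 = true) :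
    F.tdiag.map (c.monotone (Fin.le_last (φ (Fin.last m)))) (glueVal q (c.comp φ) t) =
      glueVal q c (simplexMap φ t) := by
  have hφl : inY (c.comp φ) (Fin.last m) = true := inY_eq_true_of_le _ (Fin.zero_le _) hφ0
  have hl : inY c (Fin.last n) = true := inY_eq_true_of_le c (Fin.le_last _) hφl
  rw [glueVal_of_allY _ _ _ hφl hφ0]
  refine (tdiag_map_ofY _ hφl hl _).trans ?_
  by_cases h0 : inY c 0 = false
  · rw [glueVal_of_mixed _ _ _ hl h0, xMass_simplexMap, xMass_eq_zero _ hφ0, q.2.1]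
    refine congrArg _ ?_
    change Y.map _ (Y.map _ q.1.2.1) = Y.map _ (Y.map _ q.1.2.1)
    exact (Y.map_map _ _ _).trans (Y.map_map _ _ _).symm
  · rw [glueVal_of_allY _ _ _ hl (Bool.of_not_eq_false h0)]
    exact congrArg _ (Y.map_map _ _ _)

lemma glueVal_simplexMap :
    F.tdiag.map (c.monotone (Fin.le_last (φ (Fin.last m)))) (glueVal q (c.comp φ) t) =
      glueVal q c (simplexMap φ t) := by
  by_cases hl : inY c (Fin.last n) = false
  · exact glueVal_simplexMap_of_allX q c φ t hl
  by_cases hφl : inY (c.comp φ) (Fin.last m) = false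
  · exact glueVal_simplexMap_of_mixed_allX q c φ t (Bool.of_not_eq_false hl) hφl
  by_cases hφ0 : inY (c.comp φ) 0 = false
  · exact glueVal_simplexMap_of_mixed q c φ t (Bool.of_not_eq_false hl)
      (Bool.of_not_eq_false hφl) hφ0
  · exact glueVal_simplexMap_of_allY q c φ t (Bool.of_not_eq_false hφ0)

variable (F)

def glue : C(F.Gluing, Holim (F.tdiag.pull (TPunct.incl ι))) where
  toFun q := ⟨fun n c => ContinuousMap.curry ⟨_, continuous_glueVal c⟩ q, fun m n c φ => by
    ext t
    exact glueVal_simplexMap q c φ t⟩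
  continuous_toFun := Continuous.subtype_mk (continuous_pi fun n => continuous_pi fun c =>
    (ContinuousMap.curry ⟨_, continuous_glueVal c⟩).continuous) _

lemma restrictX_glue (q : F.Gluing) : F.restrictX (F.glue q) = q.1.1 := rfl

lemma glue_comp_lift : F.glue.comp (HoPullback.lift F.holimPunctMap_cubeAMap) = F.aMapT := by
  ext x : 1
  refine Subtype.ext (funext fun n => funext fun c => ?_)
  ext t
  change glueVal _ c t = F.tdiag.map _ (F.ofX (p := (∅, false)) rfl x)
  by_cases hl : inY c (Fin.last n) = false
  · rw [glueVal_of_allX _ _ _ hl]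
    exact (tdiag_map_ofX_of_false (p := (∅, false)) _ rfl hl x).symm
  replace hl := Bool.of_not_eq_false hl
  refine Eq.trans ?_ (tdiag_map_ofX_of_true (p := (∅, false)) _ rfl hl x).symm
  by_cases h0 : inY c 0 = false
  · rw [glueVal_of_mixed _ _ _ hl h0]
    exact congrArg _ (Y.map_map _ _ _)
  · rw [glueVal_of_allY _ _ _ hl (Bool.of_not_eq_false h0)]
    rfl

end CubeMap

end

/-- if `Y` is `k`-cartesian and the `(r+1)`-cube `X → Y` is
`k`-cartesian, then `X` is `k`-cartesian. -/
theorem cartesian_of_cubeMap_isCartesian {ι : Type} (k : ℤ) {X Y : PCube ι}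
    (F : CubeMap X Y) (hY : IsCartesianC k Y) (hF : F.IsCartesian k) :
    IsCartesianC k X :=
  connMap_of_hoPullback F.holimPunctMap_cubeAMap F.glue F.restrictX_glue F.glue_comp_lift hY hF
end
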